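/- Let E be a real Hilbert space (e.g. ℝⁿ), J, G : E → ℝ convex functions, γ > 0, γ' > 0, ρ₀ ≥ 0 and z ∈ E with ‖z‖ ≤ ρ₀. Suppose: a is the proximal point of γJ at z; a' is the proximal point of γ'J at z; b is the proximal point of γG at 2a − z; b' is the proximal point of γ'G at 2a' − z; a₀ is the proximal point of γJ at 0; and b₀ is the proximal point of γG at 0. Then ‖(b' − a') − (b − a)‖ ≤ (|γ' − γ| / γ)·(2ρ₀ + ‖b₀‖ + 3‖a₀‖). (The left-hand side equals ‖F_{γ'}(z) − F_γ(z)‖, where F_γ = (rprox_{γG} ∘ rprox_{γJ} + Id)/2 is the Douglas–Rachford operator.) -/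

import Mathlib

/-!
Write `p = prox_{γf}(x)` and `q = prox_{γ'f}(x')`. Testing the optimality condition
`⟪x - p, y - p⟫ ≤ γ (f y - f p)` of each prox point at the other one gives a perturbed firm
nonexpansiveness, `‖q - p‖² ≤ (|γ' - γ| / γ) ‖x - p‖ ‖q - p‖ + ⟪x' - x, q - p⟫`, and hence
`‖rprox_{γ'f}(x') - rprox_{γf}(x)‖ ≤ 2 (|γ' - γ| / γ) ‖x - p‖ + ‖x' - x‖`.
Since `F_γ(z) = z - a + b` with `b = prox_{γG}(rprox_{γJ} z)`, this estimate for `G` at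
`2a - z, 2a' - z`, together with `‖a' - a‖ ≤ (|γ' - γ| / γ) ‖z - a‖`, bounds the difference of
the Douglas–Rachford operators by `(|γ' - γ| / γ) (‖2a - z - b‖ + ‖z - a‖)`; the two residuals
are controlled by nonexpansiveness, comparing with the prox points at `0`.
-/

open Set Filter Topology
open scoped RealInnerProductSpace

section Prox

variable {E : Type*} [NormedAddCommGroup E] [InnerProductSpace ℝ E]

def IsProxPoint (γ : ℝ) (f : E → ℝ) (x p : E) : Prop :=
  ∀ y, γ * f p + 1 / 2 * ‖p - x‖ ^ 2 ≤ γ * f y + 1 / 2 * ‖y - x‖ ^ 2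

variable {f : E → ℝ} {γ γ' : ℝ} {x x' p q : E}

theorem IsProxPoint.inner_sub_le (hf : ConvexOn ℝ univ f) (hγ : 0 ≤ γ)
    (hp : IsProxPoint γ f x p) (y : E) : ⟪x - p, y - p⟫ ≤ γ * (f y - f p) := by
  set c := γ * (f y - f p)
  have hsegment : ∀ t ∈ Ioc (0 : ℝ) 1, ⟪x - p, y - p⟫ ≤ c + t / 2 * ‖y - p‖ ^ 2 := by
    rintro t ⟨ht0, ht1⟩
    have hconv : f ((1 - t) • p + t • y) ≤ (1 - t) * f p + t * f y :=
      hf.2 (mem_univ p) (mem_univ y) (by linarith) ht0.le (by ring)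
    have hexpand : ‖(1 - t) • p + t • y - x‖ ^ 2
        = ‖p - x‖ ^ 2 - 2 * t * ⟪x - p, y - p⟫ + t ^ 2 * ‖y - p‖ ^ 2 := by
      have : (1 - t) • p + t • y - x = t • (y - p) - (x - p) := by module
      rw [this, norm_sub_sq_real, real_inner_smul_left, norm_smul, Real.norm_of_nonneg ht0.le,
        real_inner_comm, norm_sub_rev x p]
      ring
    have hmin := hp ((1 - t) • p + t • y)
    rw [hexpand] at hmin
    have : t * ⟪x - p, y - p⟫ ≤ t * (c + t / 2 * ‖y - p‖ ^ 2) := by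
      nlinarith [mul_le_mul_of_nonneg_left hconv hγ]
    exact le_of_mul_le_mul_left this ht0
  have hlim : Tendsto (fun t : ℝ ↦ c + t / 2 * ‖y - p‖ ^ 2) (𝓝[>] 0) (𝓝 c) := by
    refine tendsto_nhdsWithin_of_tendsto_nhds ?_
    simpa using ((continuous_id.div_const 2).mul continuous_const).const_add c |>.tendsto 0
  exact ge_of_tendsto hlim (eventually_of_mem (Ioc_mem_nhdsGT one_pos) hsegment)

theorem IsProxPoint.norm_sub_sq_le (hf : ConvexOn ℝ univ f) (hγ : 0 < γ) (hγ' : 0 ≤ γ')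
    (hp : IsProxPoint γ f x p) (hq : IsProxPoint γ' f x' q) :
    ‖q - p‖ ^ 2 ≤ |γ' - γ| / γ * ‖x - p‖ * ‖q - p‖ + ⟪x' - x, q - p⟫ := by
  have hpq := hp.inner_sub_le hf hγ.le q
  have hqp := hq.inner_sub_le hf hγ' p
  -- weighting the two optimality conditions by `γ'` and `γ` cancels the values of `f`
  have hweighted : γ * ‖q - p‖ ^ 2 ≤ (γ - γ') * ⟪x - p, q - p⟫ + γ * ⟪x' - x, q - p⟫ := by
    have hsplit : ⟪x' - q, p - q⟫ = ‖q - p‖ ^ 2 - ⟪x - p, q - p⟫ - ⟪x' - x, q - p⟫ := by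
      have : x' - q = (x' - x) + (x - p) - (q - p) := by abel
      rw [this, ← neg_sub q p, inner_neg_right, inner_sub_left, inner_add_left,
        real_inner_self_eq_norm_sq]
      ring
    nlinarith [mul_le_mul_of_nonneg_left hpq hγ', mul_le_mul_of_nonneg_left hqp hγ.le]
  have hCS : (γ - γ') * ⟪x - p, q - p⟫ ≤ |γ' - γ| * (‖x - p‖ * ‖q - p‖) := by
    rw [← abs_sub_comm γ γ']
    exact (le_abs_self _).trans <| by
      rw [abs_mul]; exact mul_le_mul_of_nonneg_left (abs_real_inner_le_norm _ _) (abs_nonneg _)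
  rw [div_mul_eq_mul_div, div_mul_eq_mul_div, ← sub_le_iff_le_add, le_div_iff₀ hγ]
  nlinarith

theorem norm_two_smul_sub_le_of_norm_sq_le {d m : E} {c : ℝ} (hc : 0 ≤ c)
    (h : ‖d‖ ^ 2 ≤ c * ‖d‖ + ⟪m, d⟫) : ‖(2 : ℝ) • d - m‖ ≤ 2 * c + ‖m‖ := by
  set r := (2 : ℝ) • d - m
  have hr_sq : ‖r‖ ^ 2 = 4 * ‖d‖ ^ 2 - 4 * ⟪m, d⟫ + ‖m‖ ^ 2 := by
    rw [norm_sub_sq_real, norm_smul, real_inner_smul_left, real_inner_comm, Real.norm_two]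
    ring
  have hd : 2 * ‖d‖ ≤ ‖r‖ + ‖m‖ := by
    rw [← Real.norm_two, ← norm_smul, show (2 : ℝ) • d = r + m by simp [r]]
    exact norm_add_le r m
  -- `(‖r‖ - (2c + ‖m‖)) (‖r‖ + ‖m‖) = ‖r‖² - 2c (‖r‖ + ‖m‖) - ‖m‖² ≤ 0`
  have hprod : (‖r‖ - (2 * c + ‖m‖)) * (‖r‖ + ‖m‖) ≤ 0 := by
    nlinarith [mul_le_mul_of_nonneg_left hd hc]
  rcases (add_nonneg (norm_nonneg r) (norm_nonneg m)).eq_or_lt with hzero | hpos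
  · nlinarith [norm_nonneg r, norm_nonneg m]
  · nlinarith

theorem IsProxPoint.norm_reflect_sub_le (hf : ConvexOn ℝ univ f) (hγ : 0 < γ) (hγ' : 0 ≤ γ')
    (hp : IsProxPoint γ f x p) (hq : IsProxPoint γ' f x' q) :
    ‖((2 : ℝ) • q - x') - ((2 : ℝ) • p - x)‖ ≤ 2 * (|γ' - γ| / γ * ‖x - p‖) + ‖x' - x‖ := by
  have hδ : 0 ≤ |γ' - γ| / γ * ‖x - p‖ := by positivity
  have := norm_two_smul_sub_le_of_norm_sq_le hδ (hp.norm_sub_sq_le hf hγ hγ' hq)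
  rwa [show (2 : ℝ) • (q - p) - (x' - x) = ((2 : ℝ) • q - x') - ((2 : ℝ) • p - x) by module]
    at this

theorem IsProxPoint.norm_sub_le_mul_norm_sub (hf : ConvexOn ℝ univ f) (hγ : 0 < γ)
    (hγ' : 0 ≤ γ') (hp : IsProxPoint γ f x p) (hq : IsProxPoint γ' f x q) :
    ‖q - p‖ ≤ |γ' - γ| / γ * ‖x - p‖ := by
  have := hp.norm_reflect_sub_le hf hγ hγ' hq
  rw [sub_self, norm_zero, add_zero,
    show ((2 : ℝ) • q - x) - ((2 : ℝ) • p - x) = (2 : ℝ) • (q - p) by module,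
    norm_smul, Real.norm_two] at this
  linarith

theorem IsProxPoint.norm_reflect_sub_reflect_le (hf : ConvexOn ℝ univ f) (hγ : 0 < γ)
    (hp : IsProxPoint γ f x p) (hq : IsProxPoint γ f x' q) :
    ‖((2 : ℝ) • q - x') - ((2 : ℝ) • p - x)‖ ≤ ‖x' - x‖ := by
  simpa using hp.norm_reflect_sub_le hf hγ hγ.le hq

theorem IsProxPoint.norm_sub_sub_sub_le (hf : ConvexOn ℝ univ f) (hγ : 0 < γ)
    (hp : IsProxPoint γ f x p) (hq : IsProxPoint γ f x' q) :
    ‖(x' - q) - (x - p)‖ ≤ ‖x' - x‖ := by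
  have hreflect := hp.norm_reflect_sub_reflect_le hf hγ hq
  have hsum : (2 : ℝ) • ((x' - q) - (x - p))
      = (x' - x) - (((2 : ℝ) • q - x') - ((2 : ℝ) • p - x)) := by
    module
  have := norm_sub_le (x' - x) (((2 : ℝ) • q - x') - ((2 : ℝ) • p - x))
  rw [← hsum, norm_smul, Real.norm_two] at this
  linarith

theorem IsProxPoint.norm_sub_le_norm_add (hf : ConvexOn ℝ univ f) (hγ : 0 < γ)
    (hp : IsProxPoint γ f x p) {p₀ : E} (h₀ : IsProxPoint γ f 0 p₀) :
    ‖x - p‖ ≤ ‖x‖ + ‖p₀‖ := by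
  have := h₀.norm_sub_sub_sub_le hf hγ hp
  rw [sub_zero, zero_sub, sub_neg_eq_add] at this
  calc ‖x - p‖ = ‖(x - p + p₀) - p₀‖ := by rw [add_sub_cancel_right]
    _ ≤ ‖x - p + p₀‖ + ‖p₀‖ := norm_sub_le _ _
    _ ≤ ‖x‖ + ‖p₀‖ := by linarith

theorem IsProxPoint.norm_reflect_le_norm_add (hf : ConvexOn ℝ univ f) (hγ : 0 < γ)
    (hp : IsProxPoint γ f x p) {p₀ : E} (h₀ : IsProxPoint γ f 0 p₀) :
    ‖(2 : ℝ) • p - x‖ ≤ ‖x‖ + 2 * ‖p₀‖ := by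
  have := h₀.norm_reflect_sub_reflect_le hf hγ hp
  rw [sub_zero, sub_zero] at this
  calc ‖(2 : ℝ) • p - x‖ = ‖((2 : ℝ) • p - x - (2 : ℝ) • p₀) + (2 : ℝ) • p₀‖ := by
        rw [sub_add_cancel]
    _ ≤ ‖(2 : ℝ) • p - x - (2 : ℝ) • p₀‖ + ‖(2 : ℝ) • p₀‖ := norm_add_le _ _
    _ ≤ ‖x‖ + 2 * ‖p₀‖ := by rw [norm_smul, Real.norm_two]; linarith

end Prox

theorem DR_operator_stepsize_perturbation_general {E : Type*} [NormedAddCommGroup E]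
    [InnerProductSpace ℝ E]
    (J G : E → ℝ) (hJ : ConvexOn ℝ Set.univ J) (hG : ConvexOn ℝ Set.univ G)
    {γ γ' : ℝ} (hγ : 0 < γ) (hγ' : 0 < γ') {ρ₀ : ℝ}
    (z : E) (hz : ‖z‖ ≤ ρ₀) (a a' b b' a₀ b₀ : E)
    (ha : ∀ y : E, γ * J a + 1 / 2 * ‖a - z‖ ^ 2 ≤ γ * J y + 1 / 2 * ‖y - z‖ ^ 2)
    (ha' : ∀ y : E, γ' * J a' + 1 / 2 * ‖a' - z‖ ^ 2 ≤ γ' * J y + 1 / 2 * ‖y - z‖ ^ 2)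
    (hb : ∀ y : E,
      γ * G b + 1 / 2 * ‖b - ((2 : ℝ) • a - z)‖ ^ 2 ≤
        γ * G y + 1 / 2 * ‖y - ((2 : ℝ) • a - z)‖ ^ 2)
    (hb' : ∀ y : E,
      γ' * G b' + 1 / 2 * ‖b' - ((2 : ℝ) • a' - z)‖ ^ 2 ≤
        γ' * G y + 1 / 2 * ‖y - ((2 : ℝ) • a' - z)‖ ^ 2)
    (ha₀ : ∀ y : E, γ * J a₀ + 1 / 2 * ‖a₀ - 0‖ ^ 2 ≤ γ * J y + 1 / 2 * ‖y - 0‖ ^ 2)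
    (hb₀ : ∀ y : E, γ * G b₀ + 1 / 2 * ‖b₀ - 0‖ ^ 2 ≤ γ * G y + 1 / 2 * ‖y - 0‖ ^ 2) :
    ‖(b' - a') - (b - a)‖ ≤ (|γ' - γ| / γ) * (2 * ρ₀ + ‖b₀‖ + 3 * ‖a₀‖) := by
  set δ := |γ' - γ| / γ
  have hδ : 0 ≤ δ := by positivity
  have ha_a' : ‖a' - a‖ ≤ δ * ‖z - a‖ :=
    IsProxPoint.norm_sub_le_mul_norm_sub hJ hγ hγ'.le ha ha'
  have hz_a : ‖z - a‖ ≤ ρ₀ + ‖a₀‖ := by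
    linarith [IsProxPoint.norm_sub_le_norm_add hJ hγ ha ha₀]
  have hreflect_a : ‖(2 : ℝ) • a - z‖ ≤ ρ₀ + 2 * ‖a₀‖ := by
    linarith [IsProxPoint.norm_reflect_le_norm_add hJ hγ ha ha₀]
  have hresidual_b : ‖((2 : ℝ) • a - z) - b‖ ≤ ρ₀ + 2 * ‖a₀‖ + ‖b₀‖ := by
    linarith [IsProxPoint.norm_sub_le_norm_add hG hγ hb hb₀]
  have hreflect_b := IsProxPoint.norm_reflect_sub_le hG hγ hγ'.le hb hb'
  rw [show ((2 : ℝ) • b' - ((2 : ℝ) • a' - z)) - ((2 : ℝ) • b - ((2 : ℝ) • a - z))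
      = (2 : ℝ) • ((b' - a') - (b - a)) by module,
    show ((2 : ℝ) • a' - z) - ((2 : ℝ) • a - z) = (2 : ℝ) • (a' - a) by module,
    norm_smul, norm_smul, Real.norm_two] at hreflect_b
  calc ‖(b' - a') - (b - a)‖ ≤ δ * ‖((2 : ℝ) • a - z) - b‖ + δ * ‖z - a‖ := by linarith
    _ ≤ δ * (ρ₀ + 2 * ‖a₀‖ + ‖b₀‖) + δ * (ρ₀ + ‖a₀‖) := by gcongr
    _ = δ * (2 * ρ₀ + ‖b₀‖ + 3 * ‖a₀‖) := by ring

/-- Estimate (A.3): the deviation between the Douglas–Rachford operators with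
step-sizes `γ'` and `γ`, evaluated at a point `z` with `‖z‖ ≤ ρ₀`, is bounded by
`(|γ' − γ| / γ)·(2ρ₀ + ‖prox_{γG}(0)‖ + 3‖prox_{γJ}(0)‖)`. -/
theorem DR_operator_stepsize_perturbation {E : Type*} [NormedAddCommGroup E]
    [InnerProductSpace ℝ E] [CompleteSpace E]
    (J G : E → ℝ) (hJ : ConvexOn ℝ Set.univ J) (hG : ConvexOn ℝ Set.univ G)
    {γ γ' : ℝ} (hγ : 0 < γ) (hγ' : 0 < γ') {ρ₀ : ℝ} (hρ₀ : 0 ≤ ρ₀)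
    (z : E) (hz : ‖z‖ ≤ ρ₀) (a a' b b' a₀ b₀ : E)
    (ha : ∀ y : E, γ * J a + 1 / 2 * ‖a - z‖ ^ 2 ≤ γ * J y + 1 / 2 * ‖y - z‖ ^ 2)
    (ha' : ∀ y : E, γ' * J a' + 1 / 2 * ‖a' - z‖ ^ 2 ≤ γ' * J y + 1 / 2 * ‖y - z‖ ^ 2)
    (hb : ∀ y : E,
      γ * G b + 1 / 2 * ‖b - ((2 : ℝ) • a - z)‖ ^ 2 ≤
        γ * G y + 1 / 2 * ‖y - ((2 : ℝ) • a - z)‖ ^ 2)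
    (hb' : ∀ y : E,
      γ' * G b' + 1 / 2 * ‖b' - ((2 : ℝ) • a' - z)‖ ^ 2 ≤
        γ' * G y + 1 / 2 * ‖y - ((2 : ℝ) • a' - z)‖ ^ 2)
    (ha₀ : ∀ y : E, γ * J a₀ + 1 / 2 * ‖a₀ - 0‖ ^ 2 ≤ γ * J y + 1 / 2 * ‖y - 0‖ ^ 2)
    (hb₀ : ∀ y : E, γ * G b₀ + 1 / 2 * ‖b₀ - 0‖ ^ 2 ≤ γ * G y + 1 / 2 * ‖y - 0‖ ^ 2) :
    ‖(b' - a') - (b - a)‖ ≤ (|γ' - γ| / γ) * (2 * ρ₀ + ‖b₀‖ + 3 * ‖a₀‖) :=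
  DR_operator_stepsize_perturbation_general J G hJ hG hγ hγ' z hz a a' b b' a₀ b₀ ha ha' hb hb' ha₀
    hb₀
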